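/- Let X, Y be nonempty metric spaces and f : X → Y a rough isometry. Then d∞(X) = d∞(Y). -/

import Mathlib

open Metric Filter Topology Set

/-- Logarithm of an extended natural number, valued in `EReal` (`⊤` for `⊤`). -/
noncomputable def elog (n : ℕ∞) : EReal :=
  if n = ⊤ then ⊤ else ((Real.log (n.toNat : ℝ) : ℝ) : EReal)

/-- `coverNum r Ω` : the least number of open balls of radius `r` needed to cover `Ω`,
valued in `ℕ∞` (it is `⊤` if no finite cover exists). -/
noncomputable def coverNum {X : Type*} [MetricSpace X] (r : ℝ) (Ω : Set X) : ℕ∞ :=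
  sInf ((fun s : Finset X => (s.card : ℕ∞)) ''
    {s : Finset X | Ω ⊆ ⋃ x ∈ s, Metric.ball x r})

/-- The asymptotic dimension with base point `x`:
`d∞(X) = lim_{r→∞} limsup_{R→∞} log n_r(B(x,R)) / log R`; the limit in `r` exists since the
inner expression is nonincreasing in `r`, hence equals the infimum over `r > 0`. -/
noncomputable def asympDim {X : Type*} [MetricSpace X] (x : X) : EReal :=
  ⨅ (r : ℝ) (_ : 0 < r),
    Filter.limsup (fun R : ℝ => ((Real.log R)⁻¹ : EReal) * elog (coverNum r (Metric.ball x R)))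
      Filter.atTop

/-- The asymptotic dimension of a metric space (independent of the base point). -/
noncomputable def asympDimSpace (X : Type*) [MetricSpace X] : EReal :=
  ⨆ x : X, asympDim x

/-- A rough isometry between metric spaces. -/
def IsRoughIsometry {X Y : Type*} [MetricSpace X] [MetricSpace Y] (f : X → Y) : Prop :=
  ∃ a b ε : ℝ, 1 ≤ a ∧ 0 ≤ b ∧ 0 ≤ ε ∧
    (∀ x₁ x₂ : X, a⁻¹ * dist x₁ x₂ - b ≤ dist (f x₁) (f x₂) ∧
      dist (f x₁) (f x₂) ≤ a * dist x₁ x₂ + b) ∧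
    (∀ y : Y, ∃ x : X, dist y (f x) ≤ ε)


/-! A rough isometry `f : X → Y` has a rough quasi-inverse `g : Y → X`, so by symmetry it
suffices to show `d∞(Y) ≤ d∞(X)`. The image under `f` of a cover of `B(x, R')` by `r`-balls
covers `B(y, R)` by balls of radius `a r + b + ε`, where `R'` is affine in `R`, hence
`R' ≤ R^t` for any `t > 1` once `R` is large. As `log (R^t) = t log R`, this yields
`d∞(Y) ≤ t · d∞(X)` for every `t > 1`. -/

lemma EReal.le_of_forall_one_lt_le_mul {a L : EReal} (hL : 0 ≤ L)
    (h : ∀ t : ℝ, 1 < t → a ≤ t * L) : a ≤ L := by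
  refine EReal.le_of_forall_lt_iff_le.1 fun z hz => ?_
  induction L using EReal.rec with
  | bot => exact absurd hL (by simp)
  | top => exact absurd hz (by simp)
  | coe l =>
    have hl : 0 ≤ l := by exact_mod_cast hL
    have hlz : l < z := by exact_mod_cast hz
    rcases hl.eq_or_lt with rfl | hl
    · simpa using (h 2 one_lt_two).trans (by simpa using hz.le)
    · have := h (z / l) ((one_lt_div hl).2 hlz)
      rwa [← EReal.coe_mul, div_mul_cancel₀ z hl.ne'] at this

lemma elog_mono : Monotone elog := by
  intro m n h
  rcases eq_or_ne n ⊤ with rfl | hn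
  · simp [elog]
  have hm : m ≠ ⊤ := ne_top_of_le_ne_top hn h
  simp only [elog, if_neg hm, if_neg hn, EReal.coe_le_coe_iff]
  rcases (Nat.zero_le m.toNat).eq_or_lt with h0 | h0
  · rw [← h0, Nat.cast_zero, Real.log_zero]
    exact Real.log_natCast_nonneg _
  · exact Real.log_le_log (by exact_mod_cast h0) (by exact_mod_cast ENat.toNat_le_toNat h hn)

lemma elog_nonneg {n : ℕ∞} (h : 1 ≤ n) : 0 ≤ elog n :=
  calc (0 : EReal) = elog 1 := by simp [elog]
    _ ≤ elog n := elog_mono h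

lemma inv_log_nonneg_ereal {R : ℝ} (hR : 1 ≤ R) : (0 : EReal) ≤ ((Real.log R)⁻¹ : EReal) := by
  rw [← EReal.coe_inv]
  exact_mod_cast inv_nonneg.2 (Real.log_nonneg hR)

noncomputable def logGrowth (N : ℝ → ℕ∞) : EReal :=
  limsup (fun R : ℝ => ((Real.log R)⁻¹ : EReal) * elog (N R)) atTop

lemma logGrowth_mono_of_eventually_le {N M : ℝ → ℕ∞} (h : ∀ᶠ R in atTop, N R ≤ M R) :
    logGrowth N ≤ logGrowth M := by
  refine limsup_le_limsup ?_
  filter_upwards [h, eventually_ge_atTop 1] with R hNM hR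
  exact mul_le_mul_of_nonneg_left (elog_mono hNM) (inv_log_nonneg_ereal hR)

lemma logGrowth_nonneg {N : ℝ → ℕ∞} (h : ∀ᶠ R in atTop, 1 ≤ N R) : 0 ≤ logGrowth N := by
  refine le_limsup_of_frequently_le' (Eventually.frequently ?_)
  filter_upwards [h, eventually_ge_atTop 1] with R hN hR
  exact mul_nonneg (inv_log_nonneg_ereal hR) (elog_nonneg hN)

lemma logGrowth_comp_rpow_le (N : ℝ → ℕ∞) {t : ℝ} (ht : 0 < t) :
    logGrowth (fun R => N (R ^ t)) ≤ t * logGrowth N := by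
  set g : ℝ → EReal := fun S => ((Real.log S)⁻¹ : EReal) * elog (N S)
  have hlog : ∀ᶠ R in atTop, ((Real.log R)⁻¹ : EReal) * elog (N (R ^ t)) = t * g (R ^ t) := by
    filter_upwards [eventually_gt_atTop 0] with R hR
    simp only [g, ← mul_assoc, ← EReal.coe_inv, ← EReal.coe_mul, Real.log_rpow hR, mul_inv,
      mul_inv_cancel_left₀ ht.ne']
  calc logGrowth (fun R => N (R ^ t))
      = limsup (fun R => (t : EReal) * g (R ^ t)) atTop := limsup_congr hlog
    _ = t * limsup (g ∘ (· ^ t)) atTop :=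
      EReal.limsup_const_mul_of_nonneg_of_ne_top (by exact_mod_cast ht.le) (EReal.coe_ne_top t)
    _ ≤ t * logGrowth N := by
      refine mul_le_mul_of_nonneg_left ?_ (by exact_mod_cast ht.le)
      rw [limsup_comp]
      exact limsup_le_limsup_of_le (tendsto_rpow_atTop ht)

lemma logGrowth_le_of_eventually_le_rpow {N M : ℝ → ℕ∞} (hM : ∀ᶠ R in atTop, 1 ≤ M R)
    (h : ∀ t : ℝ, 1 < t → ∀ᶠ R in atTop, N R ≤ M (R ^ t)) : logGrowth N ≤ logGrowth M :=
  EReal.le_of_forall_one_lt_le_mul (logGrowth_nonneg hM) fun t ht =>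
    (logGrowth_mono_of_eventually_le (h t ht)).trans (logGrowth_comp_rpow_le M (by linarith))

section Covering

variable {X Y : Type*} [MetricSpace X] [MetricSpace Y]

lemma coverNum_le_card {r : ℝ} {Ω : Set X} {s : Finset X} (h : Ω ⊆ ⋃ x ∈ s, ball x r) :
    coverNum r Ω ≤ s.card :=
  sInf_le ⟨s, h, rfl⟩

lemma one_le_coverNum {r : ℝ} {Ω : Set X} (h : Ω.Nonempty) : 1 ≤ coverNum r Ω := by
  refine le_sInf ?_
  rintro _ ⟨s, hs, rfl⟩
  obtain ⟨z, hz, -⟩ := mem_iUnion₂.1 (hs h.some_mem)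
  exact Nat.one_le_cast.2 (Finset.card_pos.2 ⟨z, hz⟩)

lemma coverNum_le_of_dist_le {f : X → Y} {a b ε r : ℝ} (ha : 0 < a)
    (hf : ∀ x₁ x₂, dist (f x₁) (f x₂) ≤ a * dist x₁ x₂ + b) {Ω : Set Y} {Ω' : Set X}
    (hΩ : ∀ y ∈ Ω, ∃ x ∈ Ω', dist y (f x) ≤ ε) :
    coverNum (a * r + b + ε) Ω ≤ coverNum r Ω' := by
  classical
  refine le_sInf ?_
  rintro _ ⟨s, hs, rfl⟩
  refine (coverNum_le_card (s := s.image f) fun y hy => ?_).trans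
    (Nat.cast_le.2 s.card_image_le)
  obtain ⟨x, hx, hyx⟩ := hΩ y hy
  obtain ⟨z, hz, hxz⟩ := mem_iUnion₂.1 (hs hx)
  refine mem_iUnion₂.2 ⟨f z, Finset.mem_image_of_mem f hz, ?_⟩
  have : a * dist x z < a * r := mul_lt_mul_of_pos_left (mem_ball.1 hxz) ha
  calc dist y (f z) ≤ dist y (f x) + dist (f x) (f z) := dist_triangle _ _ _
    _ ≤ ε + (a * dist x z + b) := add_le_add hyx (hf x z)
    _ < a * r + b + ε := by linarith

end Covering

lemma eventually_mul_add_le_rpow (c d : ℝ) {t : ℝ} (ht : 1 < t) :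
    ∀ᶠ R : ℝ in atTop, c * R + d ≤ R ^ t := by
  filter_upwards [(tendsto_rpow_atTop (sub_pos.2 ht)).eventually_ge_atTop (c + 1),
    eventually_ge_atTop d, eventually_gt_atTop 0] with R hpow hd hR
  calc c * R + d ≤ (c + 1) * R := by linarith
    _ ≤ R ^ (t - 1) * R := mul_le_mul_of_nonneg_right hpow hR.le
    _ = R ^ t := by rw [← Real.rpow_add_one hR.ne', sub_add_cancel]

lemma asympDim_eq_iInf_logGrowth {X : Type*} [MetricSpace X] (x : X) :
    asympDim x = ⨅ (r : ℝ) (_ : 0 < r), logGrowth fun R => coverNum r (ball x R) :=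
  rfl

namespace IsRoughIsometry

variable {X Y : Type*} [MetricSpace X] [MetricSpace Y] {f : X → Y}

lemma exists_reverse (hf : IsRoughIsometry f) : ∃ g : Y → X, IsRoughIsometry g := by
  obtain ⟨a, b, ε, ha, hb, hε, hdist, hsurj⟩ := hf
  have ha0 : 0 < a := by linarith
  have hlow : ∀ x₁ x₂, dist x₁ x₂ ≤ a * (dist (f x₁) (f x₂) + b) := fun x₁ x₂ => by
    have := (hdist x₁ x₂).1
    rwa [sub_le_iff_le_add, inv_mul_le_iff₀ ha0] at this
  choose g hg using hsurj
  have hfg : ∀ y₁ y₂, |dist y₁ y₂ - dist (f (g y₁)) (f (g y₂))| ≤ 2 * ε := fun y₁ y₂ =>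
    calc |dist y₁ y₂ - dist (f (g y₁)) (f (g y₂))|
        ≤ dist y₁ (f (g y₁)) + dist y₂ (f (g y₂)) := dist_dist_dist_le _ _ _ _
      _ ≤ 2 * ε := by linarith [hg y₁, hg y₂]
  refine ⟨g, a, a * (2 * ε + b), a * (ε + b), ha, by positivity, by positivity,
    fun y₁ y₂ => ⟨?_, ?_⟩, fun x => ⟨f x, ?_⟩⟩
  · rw [sub_le_iff_le_add, inv_mul_le_iff₀ ha0]
    calc dist y₁ y₂ ≤ dist (f (g y₁)) (f (g y₂)) + 2 * ε := by linarith [(abs_le.1 (hfg y₁ y₂)).2]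
      _ ≤ a * dist (g y₁) (g y₂) + (2 * ε + b) := by linarith [(hdist (g y₁) (g y₂)).2]
      _ ≤ a * dist (g y₁) (g y₂) + a * (a * (2 * ε + b)) := by
        gcongr; nlinarith [mul_le_mul ha ha zero_le_one ha0.le]
      _ = a * (dist (g y₁) (g y₂) + a * (2 * ε + b)) := by ring
  · have := (abs_le.1 (hfg y₁ y₂)).1
    calc dist (g y₁) (g y₂) ≤ a * (dist (f (g y₁)) (f (g y₂)) + b) := hlow _ _
      _ ≤ a * (dist y₁ y₂ + 2 * ε + b) := by gcongr; linarith
      _ = a * dist y₁ y₂ + a * (2 * ε + b) := by ring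
  · calc dist x (g (f x)) ≤ a * (dist (f x) (f (g (f x))) + b) := hlow _ _
      _ ≤ a * (ε + b) := by gcongr; exact hg (f x)

lemma asympDim_le (hf : IsRoughIsometry f) (x : X) (y : Y) : asympDim y ≤ asympDim x := by
  obtain ⟨a, b, ε, ha, hb, hε, hdist, hsurj⟩ := hf
  have ha0 : 0 < a := by linarith
  rw [asympDim_eq_iInf_logGrowth, asympDim_eq_iInf_logGrowth]
  refine le_iInf₂ fun r hr => (iInf₂_le (a * r + b + ε) (by positivity)).trans ?_
  refine logGrowth_le_of_eventually_le_rpow ?_ fun t ht => ?_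
  · filter_upwards [eventually_gt_atTop 0] with R hR
    exact one_le_coverNum ⟨x, mem_ball_self hR⟩
  filter_upwards [eventually_mul_add_le_rpow a (a * (dist (f x) y + ε + b)) ht] with R hR
  refine coverNum_le_of_dist_le ha0 (fun x₁ x₂ => (hdist x₁ x₂).2) fun y' hy' => ?_
  obtain ⟨x', hx'⟩ := hsurj y'
  refine ⟨x', mem_ball.2 (lt_of_lt_of_le ?_ hR), hx'⟩
  have hlow := (hdist x x').1
  rw [sub_le_iff_le_add, inv_mul_le_iff₀ ha0] at hlow
  have hfx : dist (f x) (f x') < dist (f x) y + R + ε :=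
    calc dist (f x) (f x') ≤ dist (f x) y + dist y y' + dist y' (f x') := dist_triangle4 _ _ _ _
      _ < dist (f x) y + R + ε := by linarith [mem_ball'.1 hy']
  calc dist x' x = dist x x' := dist_comm _ _
    _ ≤ a * (dist (f x) (f x') + b) := hlow
    _ < a * (dist (f x) y + R + ε + b) := by gcongr
    _ = a * R + a * (dist (f x) y + ε + b) := by ring

end IsRoughIsometry

/-- Proposition 1.2.10: the asymptotic dimension is invariant under rough isometries. -/
theorem stmt14 {X Y : Type*} [MetricSpace X] [MetricSpace Y] [Nonempty X] [Nonempty Y]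
    (f : X → Y) (hf : IsRoughIsometry f) :
    asympDimSpace X = asympDimSpace Y := by
  obtain ⟨g, hg⟩ := hf.exists_reverse
  obtain ⟨x₀⟩ := ‹Nonempty X›
  obtain ⟨y₀⟩ := ‹Nonempty Y›
  exact le_antisymm (iSup_le fun x => (hg.asympDim_le y₀ x).trans (le_iSup _ y₀))
    (iSup_le fun y => (hf.asympDim_le x₀ y).trans (le_iSup _ x₀))
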